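/- For nonnegative integers n, k with n ≥ k, the degenerate Stirling polynomial of the second kind satisfies S_{2,λ}(n,k|x) = (1/k!) Δ^k (x)_{n,λ}, where Δ is the forward difference operator in x; moreover (1/k!) Σ_{l=0}^k C(k,l)(-1)^{k-l} (l+x)_{n,λ} = 0 when n < k. -/

import Mathlib

open Finset PowerSeries

noncomputable section

/-- The generalized (degenerate) falling factorial `(x)_{n,λ} = ∏_{j<n} (x - jλ)`. -/
def dfall (x : ℝ) (n : ℕ) (lam : ℝ) : ℝ := ∏ j ∈ Finset.range n, (x - j * lam)

/-- The degenerate exponential `e_λ^x(t) = Σ_{n≥0} (x)_{n,λ} t^n / n!` as a formal power series. -/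
def degExp (lam x : ℝ) : PowerSeries ℝ :=
  PowerSeries.mk fun n => dfall x n lam / n.factorial

/-- The degenerate Stirling numbers of the second kind, defined by
`(1/k!)(e_λ(t)-1)^k = Σ_{n≥k} S_{2,λ}(n,k) t^n/n!`. -/
def S2 (lam : ℝ) (n k : ℕ) : ℝ :=
  (n.factorial : ℝ) / (k.factorial : ℝ) * PowerSeries.coeff n ((degExp lam 1 - 1) ^ k)

/-- The degenerate Stirling polynomials of the second kind, defined by
`(1/k!)(e_λ(t)-1)^k e_λ^x(t) = Σ_{n≥k} S_{2,λ}(n,k|x) t^n/n!`. -/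
def S2p (lam : ℝ) (n k : ℕ) (x : ℝ) : ℝ :=
  (n.factorial : ℝ) / (k.factorial : ℝ) *
    PowerSeries.coeff n ((degExp lam 1 - 1) ^ k * degExp lam x)

/-- The degenerate logarithm `log_λ(1+t) = Σ_{n≥1} λ^{n-1}(1)_{n,1/λ} t^n/n!`. -/
def degLog (lam : ℝ) : PowerSeries ℝ :=
  PowerSeries.mk fun n => if n = 0 then 0 else lam ^ (n - 1) * dfall 1 n (1 / lam) / n.factorial

/-- The degenerate Stirling numbers of the first kind, defined by
`(1/k!)(log_λ(1+t))^k = Σ_{n≥k} S_{1,λ}(n,k) t^n/n!`. -/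
def S1 (lam : ℝ) (n k : ℕ) : ℝ :=
  (n.factorial : ℝ) / (k.factorial : ℝ) * PowerSeries.coeff n ((degLog lam) ^ k)

/-- Rising factorial `⟨a⟩_k = a(a+1)⋯(a+k-1)`. -/
def rising (a : ℝ) (k : ℕ) : ℝ := ∏ j ∈ Finset.range k, (a + j)

/-- The generalized degenerate Bernoulli polynomials `β_{n,λ}^{(p)}(x)`, defined by
`Σ_{n≥0} β_{n,λ}^{(p)}(x) t^n/n! = ₂F₁(1-λ,1;p+2;1-e_λ(t)) e_λ^x(t)`.
Since `1 - e_λ(t)` has zero constant term, the coefficient of `t^n` in the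
hypergeometric series only involves the terms with `k ≤ n`. -/
def genBetaPoly (lam : ℝ) (p : ℤ) (x : ℝ) (n : ℕ) : ℝ :=
  (n.factorial : ℝ) * PowerSeries.coeff n
    ((∑ k ∈ Finset.range (n + 1),
        (rising (1 - lam) k * rising 1 k / (rising ((p : ℝ) + 2) k * k.factorial)) •
          ((1 - degExp lam 1) ^ k)) * degExp lam x)

/-- The generalized degenerate Bernoulli numbers `β_{n,λ}^{(p)} = β_{n,λ}^{(p)}(0)`. -/
def genBeta (lam : ℝ) (p : ℤ) (n : ℕ) : ℝ := genBetaPoly lam p 0 n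

/-- The degenerate type Eulerian numbers, defined by
`(-1)^{n-m} A_λ(n,m) = Σ_{k=0}^{n-m} λ^k (1)_{k+1,1/λ} C(n-k,m) S_{2,λ}(n,k)`. -/
def Eul (lam : ℝ) (n m : ℕ) : ℝ :=
  (-1 : ℝ) ^ (n - m) * ∑ k ∈ Finset.range (n - m + 1),
    lam ^ k * dfall 1 (k + 1) (1 / lam) * ((n - k).choose m : ℝ) * S2 lam n k

/-! The degenerate exponential is multiplicative in its exponent, `e_λ^a(t) e_λ^b(t) = e_λ^{a+b}(t)`,
because `(x)_{n,λ}` satisfies the binomial (Vandermonde) identity. Expanding `(e_λ(t) - 1)^k` binomially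
therefore gives `(e_λ(t) - 1)^k e_λ^x(t) = Σ_l C(k,l) (-1)^{k-l} e_λ^{x+l}(t)`, and comparing coefficients
of `t^n` yields the difference formula for every `n`. When `n < k` the left side has no `t^n` term, since
`e_λ(t) - 1` has zero constant term. -/

lemma dfall_succ (x : ℝ) (n : ℕ) (lam : ℝ) :
    dfall x (n + 1) lam = dfall x n lam * (x - n * lam) :=
  prod_range_succ _ _

lemma dfall_zero_left (n : ℕ) (lam : ℝ) : dfall 0 (n + 1) lam = 0 :=
  prod_eq_zero (mem_range.mpr n.succ_pos) (by simp)

lemma dfall_add (lam a b : ℝ) (n : ℕ) :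
    dfall (a + b) n lam =
      ∑ j ∈ range (n + 1), (n.choose j : ℝ) * (dfall a j lam * dfall b (n - j) lam) := by
  induction n with
  | zero => simp [dfall]
  | succ n ih =>
    rw [dfall_succ, ih, Finset.sum_choose_succ_mul (fun i j => dfall a i lam * dfall b j lam),
      sum_mul, ← sum_add_distrib]
    refine sum_congr rfl fun i hi => ?_
    have hin : i ≤ n := Nat.lt_succ_iff.mp (mem_range.mp hi)
    rw [Nat.succ_sub hin, dfall_succ b, dfall_succ a, Nat.cast_sub hin]
    ring

lemma coeff_degExp (lam x : ℝ) (n : ℕ) : coeff n (degExp lam x) = dfall x n lam / n.factorial :=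
  coeff_mk _ _

lemma degExp_add (lam a b : ℝ) : degExp lam (a + b) = degExp lam a * degExp lam b := by
  ext n
  rw [coeff_mul, Nat.sum_antidiagonal_eq_sum_range_succ_mk, coeff_degExp, dfall_add, sum_div]
  refine sum_congr rfl fun i hi => ?_
  rw [coeff_degExp, coeff_degExp, Nat.cast_choose ℝ (Nat.lt_succ_iff.mp (mem_range.mp hi))]
  field_simp

lemma degExp_zero (lam : ℝ) : degExp lam 0 = 1 := by
  ext (_ | n)
  · simp [coeff_degExp, dfall]
  · simp [coeff_degExp, dfall_zero_left]

lemma degExp_natCast (lam : ℝ) (l : ℕ) : degExp lam l = degExp lam 1 ^ l := by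
  induction l with
  | zero => simpa using degExp_zero lam
  | succ l ih => rw [Nat.cast_succ, degExp_add, ih, pow_succ]

lemma degExp_one_sub_one_pow_mul (lam x : ℝ) (k : ℕ) :
    (degExp lam 1 - 1) ^ k * degExp lam x =
      ∑ l ∈ range (k + 1), ((k.choose l : ℝ) * (-1) ^ (k - l)) • degExp lam (x + l) := by
  rw [sub_eq_add_neg, add_pow, sum_mul]
  refine sum_congr rfl fun l _ => ?_
  rw [← degExp_natCast, smul_eq_C_mul, add_comm x, degExp_add, map_mul, map_pow, map_neg,
    map_one, map_natCast]
  ring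

lemma S2p_eq_sum_choose (lam : ℝ) (n k : ℕ) (x : ℝ) :
    S2p lam n k x =
      (1 / (k.factorial : ℝ)) *
        ∑ l ∈ range (k + 1), (k.choose l : ℝ) * (-1) ^ (k - l) * dfall (x + l) n lam := by
  rw [S2p, degExp_one_sub_one_pow_mul, map_sum, mul_sum, mul_sum]
  refine sum_congr rfl fun l _ => ?_
  rw [coeff_smul, coeff_degExp, smul_eq_mul]
  field_simp

lemma S2p_eq_zero_of_lt (lam x : ℝ) {n k : ℕ} (h : n < k) : S2p lam n k x = 0 := by
  have hX : X ∣ degExp lam 1 - 1 := by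
    rw [X_dvd_iff, map_sub, ← coeff_zero_eq_constantCoeff_apply, coeff_degExp]
    simp [dfall]
  have hXk : X ^ k ∣ (degExp lam 1 - 1) ^ k * degExp lam x :=
    dvd_mul_of_dvd_left (pow_dvd_pow_of_dvd hX k) _
  rw [S2p, X_pow_dvd_iff.mp hXk n h, mul_zero]

theorem stmt14 (lam : ℝ) (n k : ℕ) (x : ℝ) :
    (k ≤ n →
      S2p lam n k x =
        (1 / (k.factorial : ℝ)) *
          ∑ l ∈ Finset.range (k + 1),
            (k.choose l : ℝ) * (-1) ^ (k - l) * dfall (x + l) n lam) ∧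
    (n < k →
      (1 / (k.factorial : ℝ)) *
          ∑ l ∈ Finset.range (k + 1),
            (k.choose l : ℝ) * (-1) ^ (k - l) * dfall (x + l) n lam = 0) :=
  ⟨fun _ => S2p_eq_sum_choose lam n k x,
    fun h => S2p_eq_sum_choose lam n k x ▸ S2p_eq_zero_of_lt lam x h⟩
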